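/- Let μ be an uncountable regular cardinal and let μ⁺ denote its cardinal successor. Let A and B be sets of ordinals contained in the ordinals below the initial ordinal of μ⁺, and suppose A and B contain the same ordinals below μ. Suppose further that for every ordinal ξ with μ ≤ ξ < μ⁺ there exist bijections f_ξ and g_ξ from the ordinals below μ onto the ordinals below ξ such that: (ξ ∈ A iff there is a club C in μ with otp(f_ξ '' γ) ∈ A for every γ ∈ C) and (ξ ∉ A iff there is a club C in μ with otp(f_ξ '' γ) ∉ A for every γ ∈ C), and likewise (ξ ∈ B iff there is a club C in μ with otp(g_ξ '' γ) ∈ B for every γ ∈ C) and (ξ ∉ B iff there is a club C in μ with otp(g_ξ '' γ) ∉ B for every γ ∈ C). Then A = B. -/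

import Mathlib

universe u

/-- `C` is a club in the ordinal `μ`: a set of ordinals below `μ` that is
unbounded in `μ` and closed (every limit `δ < μ` in which `C` is unbounded
belongs to `C`). -/
def IsClubIn (C : Set Ordinal.{u}) (μ : Ordinal.{u}) : Prop :=
  C ⊆ Set.Iio μ ∧
  (∀ α < μ, ∃ γ ∈ C, α ≤ γ) ∧
  (∀ δ < μ, Order.IsSuccLimit δ → (∀ α < δ, ∃ γ ∈ C, α ≤ γ ∧ γ < δ) → δ ∈ C)

/-- The order type of a set `S` of ordinals: the unique ordinal order-isomorphic
to `S` (with the order inherited from the ordinals), whenever `S` is set-sized. -/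
noncomputable def otp (S : Set Ordinal.{u}) : Ordinal.{u} :=
  sInf {o : Ordinal.{u} | Ordinal.lift.{u + 1} o =
    Ordinal.type (Subrel ((· < ·) : Ordinal.{u} → Ordinal.{u} → Prop) (· ∈ S))}

/-!
Fix `ξ ∈ [μ, μ⁺)` and the two bijections `f, g : μ → ξ`. The set of `γ < μ` closed under
`β ↦ g⁻¹ (f β)` and `β ↦ f⁻¹ (g β)` is a club on which `f '' γ = g '' γ`. On such `γ`
the ordinal `otp (f '' γ) = otp (g '' γ)` has cardinality `< μ`, so it lies below `μ`, where
`A` and `B` agree. Hence if `ξ ∈ A` and `ξ ∉ B`, the club witnessing `ξ ∈ A` via `f`, the club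
witnessing `ξ ∉ B` via `g` and the club of closure points meet (`μ` is regular uncountable)
in some `γ` with `otp (f '' γ) ∈ A` and `otp (f '' γ) ∉ B`, which is absurd.
-/

open Cardinal Order Set

theorem lift_otp {S : Set Ordinal.{u}} {ρ : Ordinal.{u}} (hS : S ⊆ Iio ρ) :
    Ordinal.lift.{u + 1} (otp S) =
      Ordinal.type (Subrel ((· < ·) : Ordinal.{u} → Ordinal.{u} → Prop) (· ∈ S)) := by
  have emb : Subrel ((· < ·) : Ordinal.{u} → Ordinal.{u} → Prop) (· ∈ S) ↪r
      Subrel ((· < ·) : Ordinal.{u} → Ordinal.{u} → Prop) (· ∈ Iio ρ) :=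
    ⟨embeddingOfSubset _ _ hS, Iff.rfl⟩
  obtain ⟨o, ho⟩ :=
    Ordinal.mem_range_lift_of_le (emb.ordinal_type_le.trans_eq (Ordinal.type_lt_Iio ρ))
  exact csInf_mem (s := {o : Ordinal.{u} | Ordinal.lift.{u + 1} o = _}) ⟨o, ho⟩

theorem otp_lt_ord {S : Set Ordinal.{u}} {ρ : Ordinal.{u}} {ν : Cardinal.{u}}
    (hS : S ⊆ Iio ρ) (hcard : #S < Cardinal.lift.{u + 1} ν) : otp S < ν.ord := by
  rwa [lt_ord, ← Cardinal.lift_lt.{u, u + 1}, Ordinal.lift_card, lift_otp hS, Ordinal.card_type]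

namespace IsClubIn

variable {μ : Ordinal.{u}} {C : Set Ordinal.{u}}

theorem nonempty (hC : IsClubIn C μ) (hμ : 0 < μ) : C.Nonempty :=
  let ⟨γ, hγ, _⟩ := hC.2.1 0 hμ
  ⟨γ, hγ⟩

theorem exists_gt (hC : IsClubIn C μ) (hμ : IsSuccLimit μ) : ∀ α < μ, ∃ γ ∈ C, α < γ := by
  intro α hα
  obtain ⟨γ, hγC, hγ⟩ := hC.2.1 (succ α) (hμ.succ_lt hα)
  exact ⟨γ, hγC, succ_le_iff.mp hγ⟩

theorem mem_of_forall_exists_between (hC : IsClubIn C μ) {δ : Ordinal.{u}} (hδ : δ < μ)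
    (hδ₀ : δ ≠ 0) (hcof : ∀ β < δ, ∃ γ ∈ C, β < γ ∧ γ < δ) : δ ∈ C := by
  have hlim : IsSuccLimit δ := by
    refine Ordinal.isSuccLimit_iff.mpr ⟨hδ₀, isSuccPrelimit_of_succ_lt fun β hβ => ?_⟩
    obtain ⟨γ, -, hβγ, hγδ⟩ := hcof β hβ
    exact (succ_le_of_lt hβγ).trans_lt hγδ
  refine hC.2.2 δ hδ hlim fun β hβ => ?_
  obtain ⟨γ, hγC, hβγ, hγδ⟩ := hcof β hβ
  exact ⟨γ, hγC, hβγ.le, hγδ⟩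

end IsClubIn

section Regular

variable {μ : Cardinal.{u}}

theorem isClubIn_closurePoints (hreg : μ.IsRegular) (hunc : ℵ₀ < μ) {F : Ordinal.{u} → Ordinal.{u}}
    (hF : ∀ β < μ.ord, F β < μ.ord) :
    IsClubIn {γ | γ < μ.ord ∧ ∀ β < γ, F β < γ} μ.ord := by
  refine ⟨fun γ hγ => hγ.1, fun α hα => ?_, fun δ hδ hlim hcof => ⟨hδ, fun β hβ => ?_⟩⟩
  · let G : Ordinal.{u} → Ordinal.{u} := fun p => ⨆ β : Iio p, F β + 1
    have hFG : ∀ {β p}, β < p → F β < G p := fun {β p} h =>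
      (lt_add_one (F β)).trans_le (Ordinal.le_iSup (fun β : Iio p => F β + 1) ⟨β, h⟩)
    have hG : ∀ p < μ.ord, G p < μ.ord := fun p hp => by
      refine Ordinal.lift_iSup_add_one_lt_of_lt_cof ?_ fun β => hF β (β.2.trans hp)
      rw [← Ordinal.lift_cof, hreg.cof_ord, mk_Iio_ordinal, Cardinal.lift_lift, Cardinal.lift_lt]
      exact lt_ord.1 hp
    refine ⟨Ordinal.nfp G α, ⟨nfp_lt_ord_of_isRegular hreg hunc.ne' hG hα, fun β hβ => ?_⟩,
      Ordinal.le_nfp G α⟩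
    obtain ⟨n, hn⟩ := Ordinal.lt_nfp_iff.mp hβ
    calc F β < G (G^[n] α) := hFG hn
      _ = G^[n + 1] α := (Function.iterate_succ_apply' G n α).symm
      _ ≤ Ordinal.nfp G α := Ordinal.iterate_le_nfp G α (n + 1)
  · obtain ⟨γ, hγ, hβγ, hγδ⟩ := hcof (succ β) (hlim.succ_lt hβ)
    exact (hγ.2 β (succ_le_iff.mp hβγ)).trans hγδ

theorem IsClubIn.inter (hreg : μ.IsRegular) (hunc : ℵ₀ < μ) {C D : Set Ordinal.{u}}
    (hC : IsClubIn C μ.ord) (hD : IsClubIn D μ.ord) : IsClubIn (C ∩ D) μ.ord := by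
  have hμ : IsSuccLimit μ.ord := isSuccLimit_ord hreg.aleph0_le
  refine ⟨fun γ hγ => hC.1 hγ.1, fun α hα => ?_, fun δ hδ hlim hcof =>
    ⟨hC.2.2 δ hδ hlim fun β hβ => ?_, hD.2.2 δ hδ hlim fun β hβ => ?_⟩⟩
  -- A nonzero closure point of `β ↦ max (c β) (d β)` is a limit of both `C` and `D`.
  · choose! c hcC hc using hC.exists_gt hμ
    choose! d hdD hd using hD.exists_gt hμ
    have hcd : ∀ β < μ.ord, max (c β) (d β) < μ.ord := fun β hβ =>
      max_lt (hC.1 (hcC β hβ)) (hD.1 (hdD β hβ))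
    obtain ⟨γ, ⟨hγμ, hγ⟩, hαγ⟩ :=
      (isClubIn_closurePoints hreg hunc hcd).2.1 (max α 1)
        (max_lt hα (Ordinal.one_lt_of_isSuccLimit hμ))
    have hγ₀ : γ ≠ 0 := (zero_lt_one.trans_le (le_of_max_le_right hαγ)).ne'
    refine ⟨γ, ⟨hC.mem_of_forall_exists_between hγμ hγ₀ fun β hβ => ?_,
      hD.mem_of_forall_exists_between hγμ hγ₀ fun β hβ => ?_⟩, le_of_max_le_left hαγ⟩
    · exact ⟨c β, hcC β (hβ.trans hγμ), hc β (hβ.trans hγμ), (le_max_left _ _).trans_lt (hγ β hβ)⟩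
    · exact ⟨d β, hdD β (hβ.trans hγμ), hd β (hβ.trans hγμ), (le_max_right _ _).trans_lt (hγ β hβ)⟩
  · obtain ⟨γ, hγ, h⟩ := hcof β hβ
    exact ⟨γ, hγ.1, h⟩
  · obtain ⟨γ, hγ, h⟩ := hcof β hβ
    exact ⟨γ, hγ.2, h⟩

theorem exists_isClubIn_image_Iio_subset (hreg : μ.IsRegular) (hunc : ℵ₀ < μ)
    {f g : Ordinal.{u} → Ordinal.{u}} {T : Set Ordinal.{u}}
    (hf : MapsTo f (Iio μ.ord) T) (hg : SurjOn g (Iio μ.ord) T) :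
    ∃ E, IsClubIn E μ.ord ∧ ∀ γ ∈ E, f '' Iio γ ⊆ g '' Iio γ := by
  set F := Function.invFunOn g (Iio μ.ord) ∘ f
  refine ⟨_, isClubIn_closurePoints hreg hunc fun β hβ => hg.mapsTo_invFunOn (hf hβ), ?_⟩
  rintro γ ⟨hγμ, hγ⟩ _ ⟨β, hβ, rfl⟩
  exact ⟨F β, hγ β hβ, hg.rightInvOn_invFunOn (hf (lt_trans hβ hγμ))⟩

theorem exists_isClubIn_image_Iio_eq (hreg : μ.IsRegular) (hunc : ℵ₀ < μ)
    {f g : Ordinal.{u} → Ordinal.{u}} {T : Set Ordinal.{u}}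
    (hf : BijOn f (Iio μ.ord) T) (hg : BijOn g (Iio μ.ord) T) :
    ∃ E, IsClubIn E μ.ord ∧ ∀ γ ∈ E, f '' Iio γ = g '' Iio γ := by
  obtain ⟨E₁, hE₁, hfg⟩ := exists_isClubIn_image_Iio_subset hreg hunc hf.mapsTo hg.surjOn
  obtain ⟨E₂, hE₂, hgf⟩ := exists_isClubIn_image_Iio_subset hreg hunc hg.mapsTo hf.surjOn
  exact ⟨E₁ ∩ E₂, hE₁.inter hreg hunc hE₂, fun γ hγ => (hfg γ hγ.1).antisymm (hgf γ hγ.2)⟩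

theorem IsClubIn.exists_mem_and_of_club (hreg : μ.IsRegular) (hunc : ℵ₀ < μ) {E : Set Ordinal.{u}}
    (hE : IsClubIn E μ.ord) {P Q : Ordinal.{u} → Prop}
    (hP : ∃ C, IsClubIn C μ.ord ∧ ∀ γ ∈ C, P γ) (hQ : ∃ C, IsClubIn C μ.ord ∧ ∀ γ ∈ C, Q γ) :
    ∃ γ ∈ E, P γ ∧ Q γ := by
  obtain ⟨C₁, hC₁, h₁⟩ := hP
  obtain ⟨C₂, hC₂, h₂⟩ := hQ
  obtain ⟨γ, ⟨hγ₁, hγ₂⟩, hγE⟩ :=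
    ((hC₁.inter hreg hunc hC₂).inter hreg hunc hE).nonempty (ord_pos.2 (aleph0_pos.trans hunc))
  exact ⟨γ, hγE, h₁ γ hγ₁, h₂ γ hγ₂⟩

theorem otp_image_Iio_lt {f : Ordinal.{u} → Ordinal.{u}} {ξ γ : Ordinal.{u}}
    (hf : MapsTo f (Iio μ.ord) (Iio ξ)) (hγ : γ < μ.ord) : otp (f '' Iio γ) < μ.ord := by
  refine otp_lt_ord (ρ := ξ) (image_subset_iff.2 fun β hβ => hf (lt_trans hβ hγ)) ?_
  calc #(f '' Iio γ) ≤ #(Iio γ) := mk_image_le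
    _ = Cardinal.lift γ.card := mk_Iio_ordinal γ
    _ < Cardinal.lift μ := Cardinal.lift_lt.mpr (lt_ord.mp hγ)

end Regular

theorem stmt_7 (μ : Cardinal) (hreg : μ.IsRegular) (hunc : Cardinal.aleph0 < μ)
    (A B : Set Ordinal)
    (hA : A ⊆ Set.Iio (Order.succ μ).ord) (hB : B ⊆ Set.Iio (Order.succ μ).ord)
    (hAB : A ∩ Set.Iio μ.ord = B ∩ Set.Iio μ.ord)
    (h : ∀ ξ, μ.ord ≤ ξ → ξ < (Order.succ μ).ord →
      ∃ f g, Set.BijOn f (Set.Iio μ.ord) (Set.Iio ξ) ∧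
        Set.BijOn g (Set.Iio μ.ord) (Set.Iio ξ) ∧
        (ξ ∈ A ↔ ∃ C, IsClubIn C μ.ord ∧ ∀ γ ∈ C, otp (f '' Set.Iio γ) ∈ A) ∧
        (ξ ∉ A ↔ ∃ C, IsClubIn C μ.ord ∧ ∀ γ ∈ C, otp (f '' Set.Iio γ) ∉ A) ∧
        (ξ ∈ B ↔ ∃ C, IsClubIn C μ.ord ∧ ∀ γ ∈ C, otp (g '' Set.Iio γ) ∈ B) ∧
        (ξ ∉ B ↔ ∃ C, IsClubIn C μ.ord ∧ ∀ γ ∈ C, otp (g '' Set.Iio γ) ∉ B)) :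
    A = B := by
  have hagree : ∀ x < μ.ord, (x ∈ A ↔ x ∈ B) := fun x hx => by
    simpa [hx] using Set.ext_iff.mp hAB x
  ext ξ
  rcases lt_or_ge ξ μ.ord with hξμ | hμξ
  · exact hagree ξ hξμ
  rcases lt_or_ge ξ (succ μ).ord with hξ | hξ
  swap
  · exact iff_of_false (fun hξA => (hA hξA).not_ge hξ) (fun hξB => (hB hξB).not_ge hξ)
  obtain ⟨f, g, hf, hg, hA₁, hA₂, hB₁, hB₂⟩ := h ξ hμξ hξ
  obtain ⟨E, hE, hfg⟩ := exists_isClubIn_image_Iio_eq hreg hunc hf hg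
  have hotp : ∀ γ ∈ E, (otp (f '' Iio γ) ∈ A ↔ otp (g '' Iio γ) ∈ B) := fun γ hγ => by
    rw [← hfg γ hγ]
    exact hagree _ (otp_image_Iio_lt hf.mapsTo (hE.1 hγ))
  constructor
  · intro hξA
    by_contra hξB
    obtain ⟨γ, hγE, h₁, h₂⟩ := hE.exists_mem_and_of_club hreg hunc (hA₁.mp hξA) (hB₂.mp hξB)
    exact h₂ ((hotp γ hγE).mp h₁)
  · intro hξB
    by_contra hξA
    obtain ⟨γ, hγE, h₁, h₂⟩ := hE.exists_mem_and_of_club hreg hunc (hB₁.mp hξB) (hA₂.mp hξA)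
    exact h₂ ((hotp γ hγE).mpr h₁)
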